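/- For natural numbers 0 < n' < n, the binomial coefficient satisfies C(n, n') ≤ n^n / (n'^{n'} · (n-n')^{(n-n')}). -/
import Mathlib


theorem choose_le_entropy_bound (n n' : ℕ) (h1 : 0 < n') (h2 : n' < n) :
    (n.choose n' : ℝ) ≤ (n : ℝ) ^ n / ((n' : ℝ) ^ n' * ((n : ℝ) - n') ^ (n - n')) := by
  have hsub : (n : ℝ) - n' = ((n - n' : ℕ) : ℝ) := by
    push_cast [Nat.cast_sub h2.le]; ring
  rw [hsub]
  have hpos : (0:ℝ) < (n' : ℝ) ^ n' * ((n - n' : ℕ) : ℝ) ^ (n - n') := by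
    have h3 : 0 < n - n' := Nat.sub_pos_of_lt h2
    have : (0:ℝ) < n' := by exact_mod_cast h1
    have : (0:ℝ) < ((n - n' : ℕ):ℝ) := by exact_mod_cast h3
    positivity
  rw [le_div_iff₀ hpos]
  have key : ((n':ℝ) + ((n - n' : ℕ):ℝ)) ^ n =
      ∑ i ∈ Finset.range (n+1), (n':ℝ) ^ i * ((n - n' : ℕ):ℝ) ^ (n - i) * n.choose i := by
    exact add_pow _ _ n
  have hn : (n:ℝ) = (n':ℝ) + ((n - n' : ℕ):ℝ) := by
    push_cast [Nat.cast_sub h2.le]; ring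
  rw [hn, key]
  calc (n.choose n' : ℝ) * ((n':ℝ) ^ n' * ((n - n' : ℕ):ℝ) ^ (n - n'))
      = (n':ℝ) ^ n' * ((n - n' : ℕ):ℝ) ^ (n - n') * n.choose n' := by ring
    _ ≤ _ := by
        apply Finset.single_le_sum (f := fun i => (n':ℝ) ^ i * ((n - n' : ℕ):ℝ) ^ (n - i) * n.choose i)
        · intro i _; positivity
        · exact Finset.mem_range.mpr (lt_of_lt_of_le h2 (Nat.le_succ n))
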